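/- arXiv:1012.3697 — 2 statements merged into one kernel-verified Lean document; each statement's English description precedes it below -/
import Mathlib

section
/- Let k ∈ ℕ, r ∈ ℝ with r ≥ 0, and let P be a finite subset of ℝ^d (with distances measured by an arbitrary norm) such that P is covered by k closed balls of radius r and |P| > k. Then there exist two distinct points p, q ∈ P with ‖p - q‖ ≤ 4r·(k/|P|)^(1/d). -/
/-!
If all pairwise distances in `P` exceed `δ = 4 r t` with `t = (k / |P|) ^ (1 / d)`, the closed
balls of radius `δ / 2` around the points of `P` are disjoint and lie in the `k` enlarged balls of
radius `r + δ / 2`. Comparing Haar volumes gives `|P| (δ / 2) ^ d ≤ k (r + δ / 2) ^ d`, and since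
`|P| t ^ d = k` this says `2 r ≤ δ`. But by pigeonhole two points of `P` share a covering ball,
so they are at distance at most `2 r`.
-/

open MeasureTheory Measure Metric Module

theorem exists_ne_dist_le_two_mul_of_card_lt {E ι : Type*} [PseudoMetricSpace E] [Fintype ι]
    {y : ι → E} {r : ℝ} {P : Finset E} (hcover : (P : Set E) ⊆ ⋃ i, closedBall (y i) r)
    (hcard : Fintype.card ι < P.card) :
    ∃ p ∈ P, ∃ q ∈ P, p ≠ q ∧ dist p q ≤ 2 * r := by
  choose f hf using fun p : P => Set.mem_iUnion.mp (hcover p.2)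
  obtain ⟨p, q, hne, hpq⟩ := Fintype.exists_ne_map_eq_of_card_lt f (by simpa using hcard)
  have hp := mem_closedBall.mp (hf p)
  have hq := mem_closedBall.mp (hf q)
  rw [hpq] at hp
  refine ⟨p, p.2, q, q.2, Subtype.coe_ne_coe.mpr hne, ?_⟩
  linarith [dist_triangle_right (p : E) q (y (f q))]

theorem card_mul_measure_closedBall_le_of_subset_iUnion {E ι : Type*} [NormedAddCommGroup E]
    [MeasurableSpace E] [BorelSpace E] (μ : Measure E) [μ.IsAddHaarMeasure] [Fintype ι]
    {y : ι → E} {R ρ : ℝ} {P : Finset E} (hcover : (P : Set E) ⊆ ⋃ i, closedBall (y i) R)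
    (hsep : (P : Set E).Pairwise fun p q => 2 * ρ < dist p q) :
    P.card * μ (closedBall 0 ρ) ≤ Fintype.card ι * μ (closedBall 0 (R + ρ)) := by
  have hdisj : (P : Set E).PairwiseDisjoint (closedBall · ρ) := fun p hp q hq hpq =>
    closedBall_disjoint_closedBall (by linarith [hsep hp hq hpq])
  have hsub : ⋃ p ∈ P, closedBall p ρ ⊆ ⋃ i, closedBall (y i) (R + ρ) := by
    refine Set.iUnion₂_subset fun p hp => ?_
    obtain ⟨i, hi⟩ := Set.mem_iUnion.mp (hcover hp)
    have hi : ρ + dist p (y i) ≤ R + ρ := by linarith [mem_closedBall.mp hi]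
    exact (closedBall_subset_closedBall' hi).trans
      (Set.subset_iUnion (fun j => closedBall (y j) (R + ρ)) i)
  calc P.card * μ (closedBall 0 ρ) = ∑ p ∈ P, μ (closedBall p ρ) := by
        simp [addHaar_closedBall_center]
    _ = μ (⋃ p ∈ P, closedBall p ρ) :=
        (measure_biUnion_finset hdisj fun _ _ => measurableSet_closedBall).symm
    _ ≤ μ (⋃ i, closedBall (y i) (R + ρ)) := measure_mono hsub
    _ ≤ ∑ i, μ (closedBall (y i) (R + ρ)) := measure_iUnion_fintype_le μ _
    _ = Fintype.card ι * μ (closedBall 0 (R + ρ)) := by simp [addHaar_closedBall_center]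

theorem card_mul_pow_le_of_subset_iUnion_closedBall {E ι : Type*} [NormedAddCommGroup E]
    [NormedSpace ℝ E] [FiniteDimensional ℝ E] [Fintype ι] {y : ι → E} {R ρ : ℝ}
    (hR : 0 ≤ R) (hρ : 0 ≤ ρ) {P : Finset E} (hcover : (P : Set E) ⊆ ⋃ i, closedBall (y i) R)
    (hsep : (P : Set E).Pairwise fun p q => 2 * ρ < dist p q) :
    P.card * ρ ^ finrank ℝ E ≤ Fintype.card ι * (R + ρ) ^ finrank ℝ E := by
  borelize E
  have h := card_mul_measure_closedBall_le_of_subset_iUnion addHaar hcover hsep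
  rw [addHaar_closedBall _ _ hρ, addHaar_closedBall _ _ (by positivity), ← mul_assoc,
    ← mul_assoc, ENNReal.mul_le_mul_iff_left (measure_ball_pos _ _ one_pos).ne'
      measure_ball_lt_top.ne, ← ENNReal.ofReal_natCast, ← ENNReal.ofReal_natCast,
    ← ENNReal.ofReal_mul (Nat.cast_nonneg _), ← ENNReal.ofReal_mul (Nat.cast_nonneg _)] at h
  exact (ENNReal.ofReal_le_ofReal_iff (by positivity)).mp h

theorem le_of_mul_mul_rpow_one_div_pow_le {n k a b : ℝ} {d : ℕ} (hd : d ≠ 0) (hn : 0 < n)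
    (hk : 0 < k) (ha : 0 ≤ a) (hb : 0 ≤ b) (h : n * (a * (k / n) ^ (1 / (d : ℝ))) ^ d ≤ k * b ^ d) :
    a ≤ b := by
  have hpow : ((k / n) ^ (1 / (d : ℝ))) ^ d = k / n := by
    rw [← Real.rpow_natCast, ← Real.rpow_mul (by positivity),
      one_div_mul_cancel (Nat.cast_ne_zero.mpr hd), Real.rpow_one]
  rw [mul_pow, hpow, mul_left_comm, mul_div_cancel₀ _ hn.ne', mul_comm] at h
  exact (pow_le_pow_iff_left₀ ha hb hd).mp (le_of_mul_le_mul_left h hk)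

theorem stmt_0 {E : Type*} [NormedAddCommGroup E] [NormedSpace ℝ E] [FiniteDimensional ℝ E]
    {d k : ℕ} (hd : Module.finrank ℝ E = d) (hd0 : 0 < d)
    {r : ℝ} (hr : 0 ≤ r) (P : Finset E)
    (y : Fin k → E) (hcover : (P : Set E) ⊆ ⋃ i, Metric.closedBall (y i) r)
    (hP : k < P.card) :
    ∃ p ∈ P, ∃ q ∈ P, p ≠ q ∧
      dist p q ≤ 4 * r * ((k : ℝ) / (P.card : ℝ)) ^ (1 / (d : ℝ)) := by
  by_contra! hfar
  obtain ⟨p, hp, q, hq, hpq, hclose⟩ :=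
    exists_ne_dist_le_two_mul_of_card_lt hcover (by simpa using hP)
  obtain ⟨i, -⟩ := Set.mem_iUnion.mp (hcover hp)
  set t := ((k : ℝ) / P.card) ^ (1 / (d : ℝ))
  have hpack := card_mul_pow_le_of_subset_iUnion_closedBall hr (by positivity : 0 ≤ 2 * r * t)
    hcover fun a ha b hb hab => by linarith [hfar a ha b hb hab]
  rw [Fintype.card_fin, hd] at hpack
  have h2r : 2 * r ≤ r + 2 * r * t :=
    le_of_mul_mul_rpow_one_div_pow_le hd0.ne' (by exact_mod_cast (Nat.zero_le k).trans_lt hP) (by exact_mod_cast i.pos)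
      (by positivity) (by positivity) hpack
  linarith [hfar p hp q hq hpq]
end

section
/- Let C_a and C_b be nonempty finite subsets of ℝ^d, each of diameter at most R, with fixed points p_a ∈ C_a and p_b ∈ C_b. Suppose there exist points y_1,…,y_ρ ∈ ℝ^d with B_R(0) ⊆ ⋃_i B_{λR}(y_i) such that the sets of indices {i : B_{λR}(y_i) ∩ (C_a − p_a) ≠ ∅} and {i : B_{λR}(y_i) ∩ (C_b − p_b) ≠ ∅} are equal. Then diam(C_a ∪ C_b) ≤ (1 + 2λ)·R + ‖p_a − p_b‖. -/
theorem stmt_10 {E : Type*} [NormedAddCommGroup E] [NormedSpace ℝ E]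
    (Ca Cb : Set E) (hCa : Ca.Finite) (hCb : Cb.Finite)
    {R lam : ℝ} (hR : 0 ≤ R) (hlam : 0 ≤ lam)
    (hdiamA : Metric.diam Ca ≤ R) (hdiamB : Metric.diam Cb ≤ R)
    (pa pb : E) (hpa : pa ∈ Ca) (hpb : pb ∈ Cb)
    {ρ : ℕ} (y : Fin ρ → E)
    (hcov : Metric.closedBall (0 : E) R ⊆ ⋃ i, Metric.closedBall (y i) (lam * R))
    (hconf : {i : Fin ρ | (Metric.closedBall (y i) (lam * R) ∩ ((fun x => x - pa) '' Ca)).Nonempty}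
      = {i : Fin ρ | (Metric.closedBall (y i) (lam * R) ∩ ((fun x => x - pb) '' Cb)).Nonempty}) :
    Metric.diam (Ca ∪ Cb) ≤ (1 + 2 * lam) * R + dist pa pb := by
  have hBa : Bornology.IsBounded Ca := hCa.isBounded
  have hBb : Bornology.IsBounded Cb := hCb.isBounded
  have hRHS : R ≤ (1 + 2 * lam) * R + dist pa pb := by
    nlinarith [dist_nonneg (x := pa) (y := pb), mul_nonneg hlam hR]
  -- key cross bound
  have key : ∀ a ∈ Ca, ∀ b ∈ Cb, dist a b ≤ (1 + 2 * lam) * R + dist pa pb := by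
    intro a ha b hb
    have h1 : a - pa ∈ Metric.closedBall (0 : E) R := by
      simp only [Metric.mem_closedBall, dist_zero_right]
      calc ‖a - pa‖ = dist a pa := by rw [dist_eq_norm]
        _ ≤ Metric.diam Ca := Metric.dist_le_diam_of_mem hBa ha hpa
        _ ≤ R := hdiamA
    obtain ⟨_, ⟨i, rfl⟩, hi⟩ := hcov h1
    have hiA : i ∈ {i : Fin ρ | (Metric.closedBall (y i) (lam * R) ∩ ((fun x => x - pa) '' Ca)).Nonempty} :=
      ⟨a - pa, hi, ⟨a, ha, rfl⟩⟩
    rw [hconf] at hiA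
    obtain ⟨z, hz, b', hb', rfl⟩ := hiA
    have h2 : dist (a - pa) (b' - pb) ≤ 2 * (lam * R) := by
      calc dist (a - pa) (b' - pb) ≤ dist (a - pa) (y i) + dist (y i) (b' - pb) :=
            dist_triangle _ _ _
        _ ≤ lam * R + lam * R := add_le_add hi (by rw [dist_comm]; exact hz)
        _ = 2 * (lam * R) := by ring
    have h3 : dist a b' ≤ 2 * (lam * R) + dist pa pb := by
      calc dist a b' = ‖a - b'‖ := dist_eq_norm a b'
        _ = ‖((a - pa) - (b' - pb)) + (pa - pb)‖ := by congr 1; abel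
        _ ≤ ‖(a - pa) - (b' - pb)‖ + ‖pa - pb‖ := norm_add_le _ _
        _ = dist (a - pa) (b' - pb) + dist pa pb := by rw [dist_eq_norm, dist_eq_norm]
        _ ≤ 2 * (lam * R) + dist pa pb := by linarith
    have h4 : dist b' b ≤ R := le_trans (Metric.dist_le_diam_of_mem hBb hb' hb) hdiamB
    calc dist a b ≤ dist a b' + dist b' b := dist_triangle _ _ _
      _ ≤ (2 * (lam * R) + dist pa pb) + R := add_le_add h3 h4
      _ = (1 + 2 * lam) * R + dist pa pb := by ring
  apply Metric.diam_le_of_forall_dist_le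
    (by positivity)
  rintro u (hu | hu) v (hv | hv)
  · exact le_trans (le_trans (Metric.dist_le_diam_of_mem hBa hu hv) hdiamA) hRHS
  · exact key u hu v hv
  · rw [dist_comm]; exact key v hv u hu
  · exact le_trans (le_trans (Metric.dist_le_diam_of_mem hBb hu hv) hdiamB) hRHS
end
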